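/- Let f : ℝ → ℝ be continuous at q and bounded, with derivative bounded by M on a neighborhood of q. Suppose σ_n > 0 satisfies σ_n/√n → 0 and σ_n √n → ∞, and q_n → q. Then (1/σ_n²) ∫_{-q_n√n}^{∞} (f(q_n) u + f'(ξ(u)) u²/√n) u φ_{σ_n}(u) du → f(q) as n → ∞, where |f'(ξ(u))| ≤ M for all u in the integration range and φ_{σ_n} is the centered Gaussian density with variance σ_n², provided q > 0. -/

import Mathlib

open MeasureTheory Real Filter Set

noncomputable def gaussianDensity (σ : ℝ) (u : ℝ) : ℝ :=
  (σ * Real.sqrt (2 * Real.pi))⁻¹ * Real.exp (-u ^ 2 / (2 * σ ^ 2))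

lemma gd_one (v : ℝ) :
    gaussianDensity 1 v = (Real.sqrt (2 * Real.pi))⁻¹ * Real.exp (-((1:ℝ)/2) * v ^ 2) := by
  unfold gaussianDensity
  rw [one_mul, show -v ^ 2 / (2 * (1:ℝ) ^ 2) = -((1:ℝ)/2) * v ^ 2 by ring]

lemma gd_cont : Continuous (gaussianDensity 1) := by
  unfold gaussianDensity
  continuity

lemma gd_nonneg (v : ℝ) : 0 ≤ gaussianDensity 1 v := by
  unfold gaussianDensity
  positivity

lemma int_sq_gauss : Integrable (fun v : ℝ => v ^ 2 * Real.exp (-((1:ℝ)/2) * v ^ 2)) := by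
  have h := integrable_rpow_mul_exp_neg_mul_sq (b := (1:ℝ)/2) (by norm_num)
      (s := 2) (by norm_num)
  have : ∀ v : ℝ, v ^ (2:ℝ) = v ^ 2 := fun v => by
    rw [show (2:ℝ) = ((2:ℕ):ℝ) by norm_num, Real.rpow_natCast]
  simpa [this] using h

lemma int_pow4_gauss : Integrable (fun v : ℝ => v ^ 4 * Real.exp (-((1:ℝ)/2) * v ^ 2)) := by
  have h := integrable_rpow_mul_exp_neg_mul_sq (b := (1:ℝ)/2) (by norm_num)
      (s := 4) (by norm_num)
  have : ∀ v : ℝ, v ^ (4:ℝ) = v ^ 4 := fun v => by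
    rw [show (4:ℝ) = ((4:ℕ):ℝ) by norm_num, Real.rpow_natCast]
  simpa [this] using h

lemma int_abs3_gauss : Integrable (fun v : ℝ => |v| ^ 3 * Real.exp (-((1:ℝ)/2) * v ^ 2)) := by
  refine (int_sq_gauss.add int_pow4_gauss).mono' ?_ ?_
  · exact ((continuous_abs.pow 3).mul (by continuity)).aestronglyMeasurable
  · refine Eventually.of_forall fun v => ?_
    have he : (0:ℝ) < Real.exp (-((1:ℝ)/2) * v ^ 2) := Real.exp_pos _
    have h3 : |v| ^ 3 ≤ v ^ 2 + v ^ 4 := by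
      have h0 : 0 ≤ |v| := abs_nonneg v
      have h2 : |v| ^ 2 = v ^ 2 := sq_abs v
      have h4 : |v| ^ 4 = v ^ 4 := by
        rw [show (4:ℕ) = 2*2 by norm_num, pow_mul, pow_mul, h2]
      nlinarith [sq_nonneg (abs v - 1), sq_nonneg ((abs v)*(abs v - 1)), pow_nonneg h0 2, pow_nonneg h0 3]
    simp only [Pi.add_apply]
    rw [Real.norm_eq_abs, abs_mul, abs_of_pos he, abs_of_nonneg (by positivity : (0:ℝ) ≤ |v|^3)]
    nlinarith [mul_le_mul_of_nonneg_right h3 he.le]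

lemma int_sq_quarter : Integrable (fun v : ℝ => v ^ 2 * Real.exp (-((1:ℝ)/4) * v ^ 2)) := by
  have h := integrable_rpow_mul_exp_neg_mul_sq (b := (1:ℝ)/4) (by norm_num)
      (s := 2) (by norm_num)
  have : ∀ v : ℝ, v ^ (2:ℝ) = v ^ 2 := fun v => by
    rw [show (2:ℝ) = ((2:ℕ):ℝ) by norm_num, Real.rpow_natCast]
  simpa [this] using h

lemma moment2 : ∫ v : ℝ, v ^ 2 * Real.exp (-((1:ℝ)/2) * v ^ 2) = Real.sqrt (2 * Real.pi) := by
  set F : ℝ → ℝ := fun x => -x * Real.exp (-((1:ℝ)/2) * x ^ 2) with hF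
  have hderiv : ∀ x : ℝ, HasDerivAt F
      (x ^ 2 * Real.exp (-((1:ℝ)/2) * x ^ 2) - Real.exp (-((1:ℝ)/2) * x ^ 2)) x := by
    intro x
    have h1 : HasDerivAt (fun x : ℝ => -x) (-1) x := (hasDerivAt_id x).neg
    have h2 : HasDerivAt (fun x : ℝ => Real.exp (-((1:ℝ)/2) * x ^ 2))
        (Real.exp (-((1:ℝ)/2) * x ^ 2) * (-((1:ℝ)/2) * (2*x))) x := by
      have : HasDerivAt (fun x : ℝ => -((1:ℝ)/2) * x ^ 2) (-((1:ℝ)/2) * (2*x)) x := by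
        simpa using ((hasDerivAt_pow 2 x).const_mul (-((1:ℝ)/2)))
      exact this.exp
    have : HasDerivAt (fun x => -x * Real.exp (-((1:ℝ)/2) * x ^ 2)) _ x := h1.mul h2
    convert this using 1
    ring
  have hint : Integrable (fun x : ℝ =>
      x ^ 2 * Real.exp (-((1:ℝ)/2) * x ^ 2) - Real.exp (-((1:ℝ)/2) * x ^ 2)) :=
    int_sq_gauss.sub (integrable_exp_neg_mul_sq (by norm_num))
  have htend : Tendsto (fun x : ℝ => |x| ^ (1:ℝ) * Real.exp (-((1:ℝ)/2) * x ^ 2))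
      (Filter.cocompact ℝ) (nhds 0) :=
    tendsto_rpow_abs_mul_exp_neg_mul_sq_cocompact (by norm_num) 1
  have hnorm : ∀ x : ℝ, ‖F x‖ = |x| ^ (1:ℝ) * Real.exp (-((1:ℝ)/2) * x ^ 2) := by
    intro x
    rw [Real.rpow_one, hF]
    rw [Real.norm_eq_abs, abs_mul, abs_neg, abs_of_pos (Real.exp_pos _)]
  have hcoc : Filter.atBot ⊔ Filter.atTop ≤ Filter.cocompact ℝ := by
    rw [cocompact_eq_atBot_atTop]
  have hbot : Tendsto F atBot (nhds 0) :=
    squeeze_zero_norm (fun x => (hnorm x).le) (htend.mono_left (le_trans le_sup_left hcoc))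
  have htop : Tendsto F atTop (nhds 0) :=
    squeeze_zero_norm (fun x => (hnorm x).le) (htend.mono_left (le_trans le_sup_right hcoc))
  have key := integral_of_hasDerivAt_of_tendsto hderiv hint hbot htop
  rw [sub_zero] at key
  have hsplit := integral_sub int_sq_gauss (integrable_exp_neg_mul_sq (b := (1:ℝ)/2) (by norm_num))
  rw [hsplit] at key
  have hg : ∫ x : ℝ, Real.exp (-((1:ℝ)/2) * x ^ 2) = Real.sqrt (2 * Real.pi) := by
    rw [integral_gaussian, show Real.pi/((1:ℝ)/2) = 2*Real.pi by ring]
  linarith [key, hg]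


lemma int_gd_sq : Integrable (fun v : ℝ => v ^ 2 * gaussianDensity 1 v) := by
  simp only [gd_one]
  have h := int_sq_gauss.const_mul ((Real.sqrt (2*Real.pi))⁻¹)
  refine h.congr ?_
  refine Eventually.of_forall fun v => ?_
  ring

lemma int_gd_abs3 : Integrable (fun v : ℝ => |v| ^ 3 * gaussianDensity 1 v) := by
  simp only [gd_one]
  have h := int_abs3_gauss.const_mul ((Real.sqrt (2*Real.pi))⁻¹)
  refine h.congr ?_
  exact Eventually.of_forall fun v => by ring

lemma int_quarter' :
    Integrable (fun v : ℝ => v ^ 2 * ((Real.sqrt (2*Real.pi))⁻¹ * Real.exp (-((1:ℝ)/4) * v ^ 2))) := by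
  have h := int_sq_quarter.const_mul ((Real.sqrt (2*Real.pi))⁻¹)
  refine h.congr ?_
  exact Eventually.of_forall fun v => by ring

lemma integral_gd_sq : ∫ v : ℝ, v ^ 2 * gaussianDensity 1 v = 1 := by
  simp only [gd_one]
  rw [show (fun v : ℝ => v ^ 2 * ((Real.sqrt (2*Real.pi))⁻¹ * Real.exp (-((1:ℝ)/2) * v ^ 2)))
      = fun v : ℝ => (Real.sqrt (2*Real.pi))⁻¹ * (v ^ 2 * Real.exp (-((1:ℝ)/2) * v ^ 2)) by
    funext v; ring]
  rw [integral_const_mul, moment2]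
  have hpos : (0:ℝ) < Real.sqrt (2 * Real.pi) := Real.sqrt_pos.mpr (by positivity)
  field_simp

lemma gd_scale {σ0 : ℝ} (h : 0 < σ0) (v : ℝ) :
    gaussianDensity σ0 (σ0 * v) = σ0⁻¹ * gaussianDensity 1 v := by
  have hne : σ0 ≠ 0 := h.ne'
  unfold gaussianDensity
  rw [show -(σ0*v) ^ 2 / (2*σ0^2) = -v ^ 2 / (2*(1:ℝ)^2) by field_simp]
  rw [mul_inv, one_mul]
  ring

lemma int_gB (M : ℝ) (gn : ℝ → ℝ) (hgm : Measurable gn) (hgb : ∀ u, |gn u| ≤ M) (σ0 : ℝ) :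
    Integrable (fun v : ℝ => gn (σ0 * v) * v ^ 3 * gaussianDensity 1 v) := by
  refine (int_gd_abs3.const_mul M).mono' ?_ ?_
  · exact (((hgm.comp (measurable_const_mul σ0)).mul
      (measurable_id.pow_const 3)).mul gd_cont.measurable).aestronglyMeasurable
  · refine Eventually.of_forall fun v => ?_
    rw [Real.norm_eq_abs, abs_mul, abs_mul, abs_of_nonneg (gd_nonneg v), abs_pow]
    have h1 : (0:ℝ) ≤ |v| ^ 3 := by positivity
    calc |gn (σ0*v)| * |v| ^ 3 * gaussianDensity 1 v
        ≤ M * |v| ^ 3 * gaussianDensity 1 v :=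
          mul_le_mul_of_nonneg_right (mul_le_mul_of_nonneg_right (hgb _) h1) (gd_nonneg v)
      _ = M * (|v| ^ 3 * gaussianDensity 1 v) := by ring

lemma key_eq (f0 M : ℝ) (gn : ℝ → ℝ) (hgm : Measurable gn) (hgb : ∀ u, |gn u| ≤ M)
    {σ0 : ℝ} (hσ0 : 0 < σ0) (a r : ℝ) :
    (1 / σ0 ^ 2) * ∫ u in Set.Ioi (-a), (f0 * u + gn u * u ^ 2 / r) * u * gaussianDensity σ0 u
      = f0 * (∫ v in Set.Ioi (-(a / σ0)), v ^ 2 * gaussianDensity 1 v)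
        + (σ0 / r) * ∫ v in Set.Ioi (-(a / σ0)), gn (σ0 * v) * v ^ 3 * gaussianDensity 1 v := by
  have hne : σ0 ≠ 0 := hσ0.ne'
  set G : ℝ → ℝ := fun u => (f0 * u + gn u * u ^ 2 / r) * u * gaussianDensity σ0 u with hG
  have hsub : ∫ v in Set.Ioi (-(a/σ0)), G (σ0 * v) = σ0⁻¹ * ∫ u in Set.Ioi (-a), G u := by
    have h := MeasureTheory.integral_comp_mul_left_Ioi G (-(a/σ0)) hσ0
    rw [show σ0 * -(a/σ0) = -a by field_simp] at h
    simpa [smul_eq_mul] using h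
  have hpt : ∀ v : ℝ, G (σ0 * v)
      = σ0 * (f0 * (v ^ 2 * gaussianDensity 1 v))
        + (σ0 ^ 2 / r) * (gn (σ0 * v) * v ^ 3 * gaussianDensity 1 v) := by
    intro v
    rw [hG]
    simp only
    rw [gd_scale hσ0]
    rcases eq_or_ne r 0 with hr | hr
    · simp only [hr, div_zero, zero_mul, add_zero]
      field_simp
    · field_simp
  have hA : Integrable (fun v : ℝ => f0 * (v ^ 2 * gaussianDensity 1 v)) :=
    int_gd_sq.const_mul f0
  have hB : Integrable (fun v : ℝ => gn (σ0 * v) * v ^ 3 * gaussianDensity 1 v) :=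
    int_gB M gn hgm hgb σ0
  have hInt : ∫ v in Set.Ioi (-(a/σ0)), G (σ0 * v)
      = σ0 * (f0 * ∫ v in Set.Ioi (-(a/σ0)), v ^ 2 * gaussianDensity 1 v)
        + (σ0 ^ 2 / r) * ∫ v in Set.Ioi (-(a/σ0)), gn (σ0 * v) * v ^ 3 * gaussianDensity 1 v := by
    rw [show (fun v => G (σ0 * v)) = fun v =>
        σ0 * (f0 * (v ^ 2 * gaussianDensity 1 v))
          + (σ0 ^ 2 / r) * (gn (σ0 * v) * v ^ 3 * gaussianDensity 1 v) from funext hpt]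
    rw [integral_add ((hA.const_mul σ0).integrableOn) ((hB.const_mul _).integrableOn),
      integral_const_mul, integral_const_mul, integral_const_mul]
  have := hsub
  rw [hInt] at this
  have h2 : ∫ u in Set.Ioi (-a), G u
      = σ0 * (σ0 * (f0 * ∫ v in Set.Ioi (-(a/σ0)), v ^ 2 * gaussianDensity 1 v)
        + (σ0 ^ 2 / r) * ∫ v in Set.Ioi (-(a/σ0)), gn (σ0 * v) * v ^ 3 * gaussianDensity 1 v) := by
    rw [this, ← mul_assoc, mul_inv_cancel₀ hne, one_mul]
  rw [h2]
  rcases eq_or_ne r 0 with hr | hr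
  · simp only [hr, div_zero, zero_mul, add_zero]
    field_simp
  · field_simp

/-- Main convergence step: if `f` is continuous at `q > 0` and bounded, `g n` (playing the
role of `u ↦ f'(ξ(u))`) is measurable and uniformly bounded by `M`, `σ_n/√n → 0`,
`σ_n √n → ∞` and `q_n → q`, then
`(1/σ_n²) ∫_{-q_n √n}^∞ (f(q_n) u + g_n(u) u²/√n) u φ_{σ_n}(u) du → f(q)`. -/
theorem main_convergence_step (f : ℝ → ℝ) (g : ℕ → ℝ → ℝ) (q : ℝ) (M : ℝ)
    (σ qn : ℕ → ℝ)
    (hq : 0 < q)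
    (hf_cont : ContinuousAt f q)
    (hf_bdd : ∃ K : ℝ, ∀ x, |f x| ≤ K)
    (hg_meas : ∀ n, Measurable (g n))
    (hg_bdd : ∀ n u, |g n u| ≤ M)
    (hσ_pos : ∀ n, 0 < σ n)
    (hσ₁ : Tendsto (fun n => σ n / Real.sqrt n) atTop (nhds 0))
    (hσ₂ : Tendsto (fun n => σ n * Real.sqrt n) atTop atTop)
    (hqn : Tendsto qn atTop (nhds q)) :
    Tendsto (fun n =>
      (1 / (σ n) ^ 2) *
        ∫ u in Set.Ioi (-(qn n * Real.sqrt n)),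
          (f (qn n) * u + g n u * u ^ 2 / Real.sqrt n) * u * gaussianDensity (σ n) u)
      atTop (nhds (f q)) := by
  have hM : 0 ≤ M := (abs_nonneg _).trans (hg_bdd 0 0)
  set c : ℕ → ℝ := fun n => qn n * Real.sqrt n / σ n with hc_def
  have hrw : ∀ n, (1 / (σ n) ^ 2) *
      ∫ u in Set.Ioi (-(qn n * Real.sqrt n)),
        (f (qn n) * u + g n u * u ^ 2 / Real.sqrt n) * u * gaussianDensity (σ n) u
      = f (qn n) * (∫ v in Set.Ioi (-(c n)), v ^ 2 * gaussianDensity 1 v)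
        + (σ n / Real.sqrt n) *
            ∫ v in Set.Ioi (-(c n)), g n (σ n * v) * v ^ 3 * gaussianDensity 1 v :=
    fun n => key_eq (f (qn n)) M (g n) (hg_meas n) (hg_bdd n) (hσ_pos n) _ _
  -- c tends to infinity
  have hc_top : Tendsto c atTop atTop := by
    have h1 : Tendsto (fun n : ℕ => (σ n / Real.sqrt n)⁻¹) atTop atTop := by
      apply Filter.Tendsto.inv_tendsto_nhdsGT_zero
      apply tendsto_nhdsWithin_of_tendsto_nhds_of_eventually_within _ hσ₁
      filter_upwards [eventually_ge_atTop 1] with n hn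
      have hn0 : (0:ℝ) < Real.sqrt n := Real.sqrt_pos.mpr (by exact_mod_cast hn)
      exact div_pos (hσ_pos n) hn0
    have h2 : Tendsto (fun n : ℕ => qn n * (σ n / Real.sqrt n)⁻¹) atTop atTop :=
      Filter.Tendsto.pos_mul_atTop hq hqn h1
    refine h2.congr fun n => ?_
    simp only [hc_def]
    rw [inv_div, mul_div_assoc]
  -- constants
  set Ct : ℝ := ∫ v : ℝ, v ^ 2 * ((Real.sqrt (2*Real.pi))⁻¹ * Real.exp (-((1:ℝ)/4) * v ^ 2)) with hCt
  set C3 : ℝ := ∫ v : ℝ, |v| ^ 3 * gaussianDensity 1 v with hC3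
  have hCt0 : 0 ≤ Ct := integral_nonneg fun v => by positivity
  have hC30 : 0 ≤ C3 := integral_nonneg fun v => mul_nonneg (by positivity) (gd_nonneg v)
  -- tail tends to zero
  have htail : Tendsto (fun n => ∫ v in Set.Iic (-(c n)), v ^ 2 * gaussianDensity 1 v)
      atTop (nhds 0) := by
    apply squeeze_zero'
      (g := fun n => Real.exp (-((1:ℝ)/4) * (c n) ^ 2) * Ct)
    · exact Eventually.of_forall fun n =>
        setIntegral_nonneg measurableSet_Iic fun v _ => mul_nonneg (sq_nonneg v) (gd_nonneg v)
    · filter_upwards [hc_top.eventually_ge_atTop 0] with n hcn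
      have hstep1 : ∫ v in Set.Iic (-(c n)), v ^ 2 * gaussianDensity 1 v
          ≤ ∫ v in Set.Iic (-(c n)), Real.exp (-((1:ℝ)/4) * (c n) ^ 2) *
              (v ^ 2 * ((Real.sqrt (2*Real.pi))⁻¹ * Real.exp (-((1:ℝ)/4) * v ^ 2))) := by
        apply setIntegral_mono_on int_gd_sq.integrableOn
          ((int_quarter'.const_mul _).integrableOn) measurableSet_Iic
        intro v hv
        rw [Set.mem_Iic] at hv
        have hv2 : (c n) ^ 2 ≤ v ^ 2 := by nlinarith
        rw [gd_one]
        have hexp : Real.exp (-((1:ℝ)/2) * v ^ 2)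
            = Real.exp (-((1:ℝ)/4) * v ^ 2) * Real.exp (-((1:ℝ)/4) * v ^ 2) := by
          rw [← Real.exp_add]; ring_nf
        have hle : Real.exp (-((1:ℝ)/4) * v ^ 2) ≤ Real.exp (-((1:ℝ)/4) * (c n) ^ 2) := by
          apply Real.exp_le_exp.mpr; nlinarith
        calc v ^ 2 * ((Real.sqrt (2*Real.pi))⁻¹ * Real.exp (-((1:ℝ)/2) * v ^ 2))
            = Real.exp (-((1:ℝ)/4) * v ^ 2) *
              (v ^ 2 * ((Real.sqrt (2*Real.pi))⁻¹ * Real.exp (-((1:ℝ)/4) * v ^ 2))) := by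
              rw [hexp]; ring
          _ ≤ Real.exp (-((1:ℝ)/4) * (c n) ^ 2) *
              (v ^ 2 * ((Real.sqrt (2*Real.pi))⁻¹ * Real.exp (-((1:ℝ)/4) * v ^ 2))) := by
              apply mul_le_mul_of_nonneg_right hle (by positivity)
      have hstep2 : ∫ v in Set.Iic (-(c n)), Real.exp (-((1:ℝ)/4) * (c n) ^ 2) *
            (v ^ 2 * ((Real.sqrt (2*Real.pi))⁻¹ * Real.exp (-((1:ℝ)/4) * v ^ 2)))
          ≤ Real.exp (-((1:ℝ)/4) * (c n) ^ 2) * Ct := by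
        rw [integral_const_mul]
        apply mul_le_mul_of_nonneg_left _ (Real.exp_pos _).le
        exact setIntegral_le_integral int_quarter' (Eventually.of_forall fun v => by positivity)
      exact hstep1.trans hstep2
    · have h1 : Tendsto (fun n => (c n) ^ 2) atTop atTop := by
        have := hc_top.atTop_mul_atTop₀ hc_top
        refine this.congr fun n => ?_
        ring
      have h2 : Tendsto (fun n => -((1:ℝ)/4) * (c n) ^ 2) atTop atBot := by
        have h3 := h1.const_mul_atTop (show (0:ℝ) < 1/4 by norm_num)
        have := tendsto_neg_atTop_atBot.comp h3
        refine this.congr fun n => ?_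
        simp only [Function.comp_apply]
        ring
      have h4 : Tendsto (fun n => Real.exp (-((1:ℝ)/4) * (c n) ^ 2)) atTop (nhds 0) :=
        Real.tendsto_exp_atBot.comp h2
      simpa using h4.mul_const Ct
  -- first factor tends to 1
  have hsplit : ∀ s : ℝ, (∫ v in Set.Iic s, v ^ 2 * gaussianDensity 1 v)
      + (∫ v in Set.Ioi s, v ^ 2 * gaussianDensity 1 v) = 1 := by
    intro s
    have h := setIntegral_union (f := fun v : ℝ => v ^ 2 * gaussianDensity 1 v)
      (μ := volume) (Set.Iic_disjoint_Ioi (le_refl s)) measurableSet_Ioi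
      int_gd_sq.integrableOn int_gd_sq.integrableOn
    rw [Set.Iic_union_Ioi, setIntegral_univ] at h
    rw [← h, integral_gd_sq]
  have hA : Tendsto (fun n => ∫ v in Set.Ioi (-(c n)), v ^ 2 * gaussianDensity 1 v)
      atTop (nhds 1) := by
    have h1 : Tendsto (fun n => 1 - ∫ v in Set.Iic (-(c n)), v ^ 2 * gaussianDensity 1 v)
        atTop (nhds 1) := by
      simpa using (tendsto_const_nhds (x := (1:ℝ)) (f := atTop)).sub htail
    refine h1.congr fun n => ?_
    have := hsplit (-(c n))
    linarith
  -- second summand tends to 0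
  have hB : Tendsto (fun n => (σ n / Real.sqrt n) *
      ∫ v in Set.Ioi (-(c n)), g n (σ n * v) * v ^ 3 * gaussianDensity 1 v) atTop (nhds 0) := by
    apply squeeze_zero_norm (a := fun n => (σ n / Real.sqrt n) * (M * C3))
    · intro n
      rw [norm_mul, Real.norm_eq_abs, Real.norm_eq_abs,
        abs_of_nonneg (div_nonneg (hσ_pos n).le (Real.sqrt_nonneg _))]
      apply mul_le_mul_of_nonneg_left _ (div_nonneg (hσ_pos n).le (Real.sqrt_nonneg _))
      have hint := int_gB M (g n) (hg_meas n) (hg_bdd n) (σ n)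
      calc |∫ v in Set.Ioi (-(c n)), g n (σ n * v) * v ^ 3 * gaussianDensity 1 v|
          ≤ ∫ v in Set.Ioi (-(c n)), |g n (σ n * v) * v ^ 3 * gaussianDensity 1 v| := by
            simpa only [Real.norm_eq_abs] using norm_integral_le_integral_norm
              (fun v => g n (σ n * v) * v ^ 3 * gaussianDensity 1 v)
              (μ := volume.restrict (Set.Ioi (-(c n))))
        _ ≤ ∫ v : ℝ, |g n (σ n * v) * v ^ 3 * gaussianDensity 1 v| :=
            setIntegral_le_integral hint.abs (Eventually.of_forall fun v => abs_nonneg _)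
        _ ≤ ∫ v : ℝ, M * (|v| ^ 3 * gaussianDensity 1 v) := by
            apply integral_mono hint.abs (int_gd_abs3.const_mul M)
            intro v
            simp only
            rw [abs_mul, abs_mul, abs_of_nonneg (gd_nonneg v), abs_pow]
            calc |g n (σ n * v)| * |v| ^ 3 * gaussianDensity 1 v
                ≤ M * |v| ^ 3 * gaussianDensity 1 v :=
                  mul_le_mul_of_nonneg_right
                    (mul_le_mul_of_nonneg_right (hg_bdd n _) (by positivity)) (gd_nonneg v)
              _ = M * (|v| ^ 3 * gaussianDensity 1 v) := by ring
        _ = M * C3 := by rw [integral_const_mul]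
    · simpa using hσ₁.mul_const (M * C3)
  have hfq : Tendsto (fun n => f (qn n)) atTop (nhds (f q)) := hf_cont.tendsto.comp hqn
  have hfinal := (hfq.mul hA).add hB
  rw [mul_one, add_zero] at hfinal
  exact hfinal.congr fun n => (hrw n).symm
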